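/- Let S be a string whose substring S[x..y] is α-periodic (α ≥ 1). Suppose there exist positions x ≤ u ≤ v ≤ y such that S[u..v] is a palindrome and v − u + 1 ≥ α. Then there exist positions x ≤ u' ≤ v' ≤ y such that S[u'..v'] is a palindrome and v' − u' + 1 ≥ (y − x + 1) − α. -/

import Mathlib

/-!
Reflecting position `p` in a window `S[X..Y]` sends it to `X + Y - p`. If `X + Y ≡ u + v` modulo
the period `α`, this agrees modulo `α` with the reflection in the palindrome `S[u..v]`. Since
`S[u..v]` has length at least `α`, every residue class has a representative `q` in it, so
`S p = S q = S (u + v - q) = S (X + Y - p)` by periodicity. Choosing `X < x + α` with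
`X + y ≡ u + v` gives the palindrome `S[X..y]` of length at least `(y - x + 1) - α`.
-/

namespace Nat

theorem exists_mem_Ico_add_modEq {a : ℕ} (ha : 0 < a) (x k c : ℕ) :
    ∃ q, x ≤ q ∧ q < x + a ∧ q + k ≡ c [MOD a] := by
  set r := (c + a * (x + k) - (x + k)) % a
  have hr : r < a := Nat.mod_lt _ ha
  have hxk : x + k ≤ a * (x + k) := Nat.le_mul_of_pos_left _ ha
  refine ⟨x + r, le_self_add, by omega, ?_⟩
  calc x + r + k = (x + k) + r := by ring
    _ ≡ (x + k) + (c + a * (x + k) - (x + k)) [MOD a] := (Nat.mod_modEq _ a).add_left _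
    _ = c + (x + k) * a := by rw [Nat.add_sub_of_le (hxk.trans (Nat.le_add_left _ c)), mul_comm]
    _ ≡ c [MOD a] := (Nat.modEq_add_mul_modulus_iff.mpr rfl).symm

end Nat

section Strings

variable {A : Type*}

def IsPeriodicOn (S : ℕ → A) (a x y : ℕ) : Prop :=
  ∀ t, x ≤ t → t + a ≤ y → S t = S (t + a)

def IsPalindromeOn (S : ℕ → A) (u v : ℕ) : Prop :=
  ∀ p, u ≤ p → p ≤ v → S p = S (u + v - p)

theorem isPalindromeOn_iff {S : ℕ → A} {u v : ℕ} (huv : u ≤ v) :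
    IsPalindromeOn S u v ↔
      ∀ t, 1 ≤ t → t ≤ v - u + 1 → S (u + t - 1) = S (v + 1 - t) := by
  constructor
  · intro h t ht1 ht2
    rw [h (u + t - 1) (by omega) (by omega)]
    congr 1
    omega
  · intro h p hup hpv
    have := h (p - u + 1) (by omega) (by omega)
    rwa [show u + (p - u + 1) - 1 = p by omega, show v + 1 - (p - u + 1) = u + v - p by omega]
      at this

namespace IsPeriodicOn

variable {S : ℕ → A} {a x y : ℕ}

theorem eq_add_mul (hS : IsPeriodicOn S a x y) {p : ℕ} (hxp : x ≤ p) :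
    ∀ k, p + a * k ≤ y → S p = S (p + a * k)
  | 0, _ => rfl
  | k + 1, hk => by
    rw [eq_add_mul hS hxp k (by nlinarith), hS (p + a * k) (by omega) (by rw [mul_add] at hk; omega)]
    ring_nf

theorem eq_of_modEq (hS : IsPeriodicOn S a x y) {p q : ℕ} (hxp : x ≤ p) (hpy : p ≤ y)
    (hxq : x ≤ q) (hqy : q ≤ y) (hpq : p ≡ q [MOD a]) : S p = S q := by
  wlog hle : p ≤ q generalizing p q
  · exact (this hxq hqy hxp hpy hpq.symm (by omega)).symm
  obtain ⟨k, hk⟩ := (Nat.modEq_iff_dvd' hle).mp hpq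
  rw [show q = p + a * k by omega]
  exact hS.eq_add_mul hxp k (by omega)

theorem isPalindromeOn_of_modEq (hS : IsPeriodicOn S a x y) (ha : 0 < a) {u v X Y : ℕ}
    (hxu : x ≤ u) (huv : u ≤ v) (hvy : v ≤ y) (hpal : IsPalindromeOn S u v) (hlen : a ≤ v - u + 1)
    (hxX : x ≤ X) (hYy : Y ≤ y) (hXY : X + Y ≡ u + v [MOD a]) : IsPalindromeOn S X Y := by
  intro p hXp hpY
  obtain ⟨q, huq, hqa, hpq⟩ := Nat.exists_mem_Ico_add_modEq ha u 0 p
  have hqv : q ≤ v := by omega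
  have hrefl : u + v - q ≡ X + Y - p [MOD a] := by
    refine Nat.ModEq.add_right_cancel' q ?_
    calc u + v - q + q = u + v := by omega
      _ ≡ X + Y [MOD a] := hXY.symm
      _ = X + Y - p + p := by omega
      _ ≡ X + Y - p + q [MOD a] := hpq.symm.add_left _
  calc S p = S q := hS.eq_of_modEq (by omega) (by omega) (by omega) (by omega) hpq.symm
    _ = S (u + v - q) := hpal q huq hqv
    _ = S (X + Y - p) := hS.eq_of_modEq (by omega) (by omega) (by omega) (by omega) hrefl

end IsPeriodicOn

end Strings

theorem long_palindrome_in_periodic_general {A : Type*} (S : ℕ → A) (x y a u v : ℕ)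
    (ha : 1 ≤ a)
    (hper : ∀ t, x ≤ t → t + a ≤ y → S t = S (t + a))
    (hxu : x ≤ u) (huv : u ≤ v) (hvy : v ≤ y)
    (hpal : ∀ t, 1 ≤ t → t ≤ v - u + 1 → S (u + t - 1) = S (v + 1 - t))
    (hlen : a ≤ v - u + 1) :
    ∃ u' v', x ≤ u' ∧ u' ≤ v' ∧ v' ≤ y ∧
      (y - x + 1) - a ≤ v' - u' + 1 ∧
      ∀ t, 1 ≤ t → t ≤ v' - u' + 1 → S (u' + t - 1) = S (v' + 1 - t) := by
  by_cases hshort : y + 1 ≤ x + a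
  · exact ⟨u, v, hxu, huv, hvy, by omega, hpal⟩
  obtain ⟨X, hxX, hXa, hXy⟩ := Nat.exists_mem_Ico_add_modEq ha x y (u + v)
  have hXpal : IsPalindromeOn S X y :=
    IsPeriodicOn.isPalindromeOn_of_modEq hper ha hxu huv hvy ((isPalindromeOn_iff huv).mpr hpal)
      hlen hxX le_rfl hXy
  exact ⟨X, y, hxX, by omega, le_rfl, by omega, (isPalindromeOn_iff (by omega)).mp hXpal⟩

/-- If `S[x..y]` is `α`-periodic and contains a palindrome substring `S[u..v]`
of length at least `α`, then `S[x..y]` contains a palindrome substring of length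
at least `(y - x + 1) - α`. -/
theorem long_palindrome_in_periodic {A : Type*} (S : ℕ → A) (n x y a u v : ℕ)
    (ha : 1 ≤ a) (hx : 1 ≤ x) (hyn : y ≤ n)
    (hper : ∀ t, x ≤ t → t + a ≤ y → S t = S (t + a))
    (hxu : x ≤ u) (huv : u ≤ v) (hvy : v ≤ y)
    (hpal : ∀ t, 1 ≤ t → t ≤ v - u + 1 → S (u + t - 1) = S (v + 1 - t))
    (hlen : a ≤ v - u + 1) :
    ∃ u' v', x ≤ u' ∧ u' ≤ v' ∧ v' ≤ y ∧
      (y - x + 1) - a ≤ v' - u' + 1 ∧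
      ∀ t, 1 ≤ t → t ≤ v' - u' + 1 → S (u' + t - 1) = S (v' + 1 - t) :=
  long_palindrome_in_periodic_general S x y a u v ha hper hxu huv hvy hpal hlen
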